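/- For n ≥ 0 and t > 0, J_n(t) = (t^{2n+1} c^{n+1}/n!) ∑_{r=0}^∞ ((n+r)!/r!) (ct)^{2r}/(2r+2n+1)!, where J_n(t) = ∫₀ᵗ dt₁ ⋯ ∫_{t_{n−1}}ᵗ dt_n ∏_{k=1}^{n+1} sinh(c(t_k−t_{k−1})) with t₀=0, t_{n+1}=t and J₀(t)=sinh(ct). -/

import Mathlib

/-!
Translation invariance of the simplex integral makes `J_{n+1}` the Laplace convolution of
`s ↦ sinh (c s)` with `J_n`. Two power series are convolved term by term with the Beta integral
`∫₀ᵗ sᵃ (t - s)ᵇ ds = a! b! / (a + b + 1)! · tᵃ⁺ᵇ⁺¹`; collecting terms along antidiagonals,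
the hockey-stick identity `∑_{r ≤ R} C(n + r, n) = C(n + R + 1, n + 1)` turns the coefficients
of `J_n` into those of `J_{n+1}`. Induction on `n`, starting from the series of `sinh`, gives
the formula.
-/

open Real MeasureTheory

/-- Iterated simplex integral with `s₀ = a`, `s_{n+1} = t`. -/
noncomputable def iterInt (f : ℝ → ℝ) : ℕ → ℝ → ℝ → ℝ
  | 0, a, t => f (t - a)
  | n+1, a, t => ∫ s in a..t, f (s - a) * iterInt f n s t

/-- `J_n(t)`: simplex integral of products of hyperbolic sines of increments,
`J_0(t) = sinh (c t)`. -/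
noncomputable def J (c : ℝ) (n : ℕ) (t : ℝ) : ℝ :=
  iterInt (fun u => Real.sinh (c * u)) n 0 t

open Nat Finset

theorem iterInt_eq_iterInt_zero (f : ℝ → ℝ) (n : ℕ) (a t : ℝ) :
    iterInt f n a t = iterInt f n 0 (t - a) := by
  induction n generalizing a t with
  | zero => simp [iterInt]
  | succ n ih =>
    have h := intervalIntegral.integral_comp_sub_right (a := a) (b := t)
      (fun u => f u * iterInt f n 0 (t - a - u)) a
    simp only [sub_sub_sub_cancel_right, sub_self] at h
    simp only [iterInt, ih _ t, ih _ (t - a), sub_zero, h]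

theorem J_succ (c : ℝ) (n : ℕ) (t : ℝ) :
    J c (n + 1) t = ∫ s in (0 : ℝ)..t, sinh (c * s) * J c n (t - s) := by
  simp only [J, iterInt, iterInt_eq_iterInt_zero _ n _ t, sub_zero]

theorem integral_pow_mul_sub_pow (t : ℝ) (a b : ℕ) :
    ∫ s in (0 : ℝ)..t, s ^ a * (t - s) ^ b = a ! * b ! / (a + b + 1)! * t ^ (a + b + 1) := by
  induction b generalizing a with
  | zero =>
    simp only [pow_zero, mul_one, integral_pow, add_zero, factorial_zero, cast_one, factorial_succ]
    rw [zero_pow (succ_ne_zero a)]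
    push_cast
    field_simp
    ring
  | succ b ih =>
    have hint : ∀ m, IntervalIntegrable (fun s : ℝ => s ^ m * (t - s) ^ b) volume 0 t :=
      fun m => by apply Continuous.intervalIntegrable; fun_prop
    have hsplit : ∫ s in (0 : ℝ)..t, s ^ a * (t - s) ^ (b + 1) =
        t * (∫ s in (0 : ℝ)..t, s ^ a * (t - s) ^ b) -
          ∫ s in (0 : ℝ)..t, s ^ (a + 1) * (t - s) ^ b := by
      rw [← intervalIntegral.integral_const_mul, ← intervalIntegral.integral_sub
        ((hint a).const_mul t) (hint (a + 1))]
      congr 1 with s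
      ring
    rw [hsplit, ih, ih, show a + 1 + b + 1 = a + b + 1 + 1 by ring,
      show a + (b + 1) + 1 = a + b + 1 + 1 by ring, factorial_succ (a + b + 1), factorial_succ a,
      factorial_succ b]
    push_cast
    field_simp
    ring

theorem HasSum.sum_antidiagonal {α A : Type*} [AddCommMonoid α] [TopologicalSpace α]
    [ContinuousAdd α] [RegularSpace α] [AddCommMonoid A] [HasAntidiagonal A]
    {f : A × A → α} {a : α} (hf : HasSum f a) :
    HasSum (fun n => ∑ kl ∈ antidiagonal n, f kl) a :=
  (HasAntidiagonal.sigmaAntidiagonalEquivProd.hasSum_iff.mpr hf).sigma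
    fun n => (antidiagonal n).hasSum f

theorem norm_mul_pow_le_of_abs_le (x : ℝ) (m : ℕ) {s t : ℝ} (h : |s| ≤ |t|) :
    ‖x * s ^ m‖ ≤ ‖x‖ * |t| ^ m := by
  rw [norm_mul, norm_pow, Real.norm_eq_abs s]
  gcongr

theorem hasSum_integral_tsum_mul_tsum_sub {a b : ℕ → ℝ} {p q : ℕ → ℕ} {t : ℝ}
    (ha : Summable fun k => ‖a k‖ * |t| ^ p k) (hb : Summable fun l => ‖b l‖ * |t| ^ q l) :
    HasSum (fun kl : ℕ × ℕ => a kl.1 * b kl.2 *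
        ((p kl.1)! * (q kl.2)! / (p kl.1 + q kl.2 + 1)!) * t ^ (p kl.1 + q kl.2 + 1))
      (∫ s in (0 : ℝ)..t, (∑' k, a k * s ^ p k) * ∑' l, b l * (t - s) ^ q l) := by
  have hterm : ∀ kl : ℕ × ℕ,
      ∫ s in (0 : ℝ)..t, a kl.1 * s ^ p kl.1 * (b kl.2 * (t - s) ^ q kl.2) =
        a kl.1 * b kl.2 * ((p kl.1)! * (q kl.2)! / (p kl.1 + q kl.2 + 1)!) *
          t ^ (p kl.1 + q kl.2 + 1) := by
    rintro ⟨k, l⟩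
    rw [mul_assoc (a k * b l), ← integral_pow_mul_sub_pow, ← intervalIntegral.integral_const_mul]
    congr 1 with s
    ring
  have hsub : ∀ s ∈ Set.uIoc (0 : ℝ) t, |s| ≤ |t| ∧ |t - s| ≤ |t| := fun s hs => by
    have hs' := Set.uIoc_subset_uIcc hs
    have h1 := Set.abs_sub_left_of_mem_uIcc hs'
    have h2 := Set.abs_sub_right_of_mem_uIcc hs'
    simp only [sub_zero] at h1 h2
    exact ⟨h1, h2⟩
  rw [← funext hterm]
  refine intervalIntegral.hasSum_integral_of_dominated_convergence
    (fun kl _ => ‖a kl.1‖ * |t| ^ p kl.1 * (‖b kl.2‖ * |t| ^ q kl.2)) (fun kl => ?_)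
    (fun kl => ae_of_all _ fun s hs => ?_) (ae_of_all _ fun _ _ => ?_) intervalIntegrable_const
    (ae_of_all _ fun s hs => ?_)
  · exact (by fun_prop : Continuous _).aestronglyMeasurable
  · rw [norm_mul]
    exact mul_le_mul (norm_mul_pow_le_of_abs_le _ _ (hsub s hs).1)
      (norm_mul_pow_le_of_abs_le _ _ (hsub s hs).2) (norm_nonneg _) (by positivity)
  · exact ha.mul_of_nonneg hb (fun _ => by positivity) (fun _ => by positivity)
  · have ha' : Summable fun k => ‖a k * s ^ p k‖ :=
      ha.of_nonneg_of_le (fun _ => norm_nonneg _) fun _ =>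
        norm_mul_pow_le_of_abs_le _ _ (hsub s hs).1
    have hb' : Summable fun l => ‖b l * (t - s) ^ q l‖ :=
      hb.of_nonneg_of_le (fun _ => norm_nonneg _) fun _ =>
        norm_mul_pow_le_of_abs_le _ _ (hsub s hs).2
    exact ha'.of_norm.hasSum.mul hb'.of_norm.hasSum
      (summable_mul_of_summable_norm (f := fun k => a k * s ^ p k)
        (g := fun l => b l * (t - s) ^ q l) ha' hb')

noncomputable def jCoeff (c : ℝ) (n r : ℕ) : ℝ :=
  (n + r).choose n * c ^ (2 * r + n + 1) / (2 * r + 2 * n + 1)!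

theorem jCoeff_abs (c : ℝ) (n r : ℕ) : jCoeff |c| n r = ‖jCoeff c n r‖ := by
  simp only [jCoeff, norm_div, norm_mul, norm_pow, Real.norm_eq_abs, Nat.abs_cast]

theorem sum_antidiagonal_jCoeff (c t : ℝ) (n R : ℕ) :
    ∑ kl ∈ antidiagonal R, c ^ (2 * kl.1 + 1) / (2 * kl.1 + 1)! * jCoeff c n kl.2 *
      ((2 * kl.1 + 1)! * (2 * kl.2 + 2 * n + 1)! / (2 * kl.1 + 1 + (2 * kl.2 + 2 * n + 1) + 1)!) *
      t ^ (2 * kl.1 + 1 + (2 * kl.2 + 2 * n + 1) + 1) =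
    jCoeff c (n + 1) R * t ^ (2 * R + 2 * (n + 1) + 1) := by
  calc _ = ∑ kl ∈ antidiagonal R, ((n + kl.2).choose n : ℝ) *
        (c ^ (2 * R + n + 2) * t ^ (2 * R + 2 * n + 3) / (2 * R + 2 * n + 3)!) := by
        refine sum_congr rfl fun ⟨k, r⟩ hkr => ?_
        rw [HasAntidiagonal.mem_antidiagonal] at hkr
        subst hkr
        rw [jCoeff, show 2 * k + 1 + (2 * r + 2 * n + 1) + 1 = 2 * (k + r) + 2 * n + 3 by ring]
        field_simp
        ring
    _ = _ := by
        rw [← sum_mul, ← Nat.cast_sum, sum_antidiagonal_choose_add, jCoeff,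
          add_right_comm n 1 R, show 2 * R + 2 * (n + 1) + 1 = 2 * R + 2 * n + 3 by ring]
        ring

theorem hasSum_J (c : ℝ) (n : ℕ) (t : ℝ) :
    HasSum (fun r => jCoeff c n r * t ^ (2 * r + 2 * n + 1)) (J c n t) := by
  induction n generalizing c t with
  | zero =>
    convert hasSum_sinh (c * t) using 1
    · funext r
      rw [jCoeff, mul_pow]
      simp only [zero_add, choose_zero_right, cast_one, add_zero, one_mul, mul_zero]
      ring
    · simp [J, iterInt]
  | succ n ih =>
    have hsinh : ∀ x, HasSum (fun k => c ^ (2 * k + 1) / (2 * k + 1)! * x ^ (2 * k + 1))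
        (sinh (c * x)) := fun x => by
        convert hasSum_sinh (c * x) using 2 with k
        rw [mul_pow]
        ring
    have ha : Summable fun k => ‖c ^ (2 * k + 1) / (2 * k + 1)!‖ * |t| ^ (2 * k + 1) := by
      refine (hasSum_sinh (|c| * |t|)).summable.congr fun k => ?_
      rw [norm_div, norm_pow, Real.norm_eq_abs, RCLike.norm_natCast, mul_pow]
      ring
    -- absolute convergence is the same expansion at `|c|, |t|`
    have hb : Summable fun r => ‖jCoeff c n r‖ * |t| ^ (2 * r + 2 * n + 1) := by
      simpa only [jCoeff_abs] using (ih |c| |t|).summable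
    have hconv := (hasSum_integral_tsum_mul_tsum_sub ha hb).sum_antidiagonal
    simp only [sum_antidiagonal_jCoeff] at hconv
    convert hconv using 1
    rw [J_succ]
    congr 1 with s
    rw [(hsinh s).tsum_eq, (ih c (t - s)).tsum_eq]

theorem iterSinh_series_general (c : ℝ) (n : ℕ) (t : ℝ) :
    J c n t = t ^ (2 * n + 1) * c ^ (n + 1) / (n.factorial : ℝ) *
      ∑' r : ℕ, ((n + r).factorial : ℝ) / (r.factorial : ℝ) *
        (c * t) ^ (2 * r) / ((2 * r + 2 * n + 1).factorial : ℝ) := by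
  rw [← (hasSum_J c n t).tsum_eq, ← tsum_mul_left]
  congr 1 with r
  rw [jCoeff, Nat.cast_add_choose]
  field_simp
  ring

/-- explicit series expression
`J_n(t) = (t^{2n+1} c^{n+1}/n!) ∑_{r=0}^∞ ((n+r)!/r!) (ct)^{2r}/(2r+2n+1)!`. -/
theorem iterSinh_series (c : ℝ) (hc : 0 < c) (n : ℕ) (t : ℝ) (ht : 0 < t) :
    J c n t = t ^ (2 * n + 1) * c ^ (n + 1) / (n.factorial : ℝ) *
      ∑' r : ℕ, ((n + r).factorial : ℝ) / (r.factorial : ℝ) *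
        (c * t) ^ (2 * r) / ((2 * r + 2 * n + 1).factorial : ℝ) :=
  iterSinh_series_general c n t
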